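/- arXiv:2603.00008 — 5 statements merged into one kernel-verified Lean document; each statement's English description precedes it below -/
import Mathlib

section
/- Let G = (Args, τ, Att, Supp) be a finite acyclic QBAG, α an arbitrary aggregation function and ι an arbitrary influence function, and σ the resulting modular final strength. Then for every x ∈ Args and every A' ⊆ Args such that no element of A' can reach x, the modular final strength of x computed in the restricted QBAG G↓(Args∖A') equals σ_G(x). (Strong directionality of modular semantics, acyclic case.) -/
/-- A finite Quantitative Bipolar Argumentation Graph: a finite set of arguments,
an initial strength function, and attack/support relations. -/
structure QBAG (U : Type*) where
  Args : Finset U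
  τ : U → ℝ
  Att : Finset (U × U)
  Supp : Finset (U × U)

namespace QBAG

variable {U : Type*} [DecidableEq U]

/-- Directed edge relation of the QBAG: attack or support. -/
def edge (G : QBAG U) (a b : U) : Prop := (a, b) ∈ G.Att ∨ (a, b) ∈ G.Supp

/-- `a` can reach `b`: there is a directed path from `a` to `b`. -/
def reaches (G : QBAG U) (a b : U) : Prop := Relation.ReflTransGen G.edge a b

/-- The QBAG is acyclic: no directed cycle in `(Args, Att ∪ Supp)`. -/
def Acyclic (G : QBAG U) : Prop := ∀ a : U, ¬ Relation.TransGen G.edge a a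

/-- Attackers `R⁻(x)` of an argument (as a finite set). -/
def attackers (G : QBAG U) (x : U) : Finset U := G.Args.filter (fun a => (a, x) ∈ G.Att)

/-- Supporters `R⁺(x)` of an argument (as a finite set). -/
def supporters (G : QBAG U) (x : U) : Finset U := G.Args.filter (fun a => (a, x) ∈ G.Supp)

/-- Restriction `G↓S` of a QBAG to a finite set of arguments `S`. -/
def restrict (G : QBAG U) (S : Finset U) : QBAG U :=
  ⟨S, G.τ, G.Att.filter (fun p => p.1 ∈ S ∧ p.2 ∈ S),
    G.Supp.filter (fun p => p.1 ∈ S ∧ p.2 ∈ S)⟩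

end QBAG

/-- `f` is the modular final strength of `G` determined by the aggregation
function `α` and the influence function `ι`:
`f x = ι (τ x) (α (multiset of f y for y ∈ R⁻(x)) (multiset of f y for y ∈ R⁺(x)))`
for every argument `x` (this recursion has a unique solution on acyclic QBAGs). -/
def IsModular {U : Type*} [DecidableEq U] (G : QBAG U)
    (α : Multiset ℝ → Multiset ℝ → ℝ) (ι : ℝ → ℝ → ℝ) (f : U → ℝ) : Prop :=
  ∀ x ∈ G.Args,
    f x = ι (G.τ x) (α ((G.attackers x).val.map f) ((G.supporters x).val.map f))

/-- Strong directionality of modular semantics on finite acyclic QBAGs: if no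
element of `A'` can reach `x`, then the modular final strength of `x` computed in
the restricted QBAG `G↓(Args∖A')` equals the one computed in `G`. -/
theorem modular_strong_directionality {U : Type*} [DecidableEq U]
    (G : QBAG U)
    (hAtt : ∀ p ∈ G.Att, p.1 ∈ G.Args ∧ p.2 ∈ G.Args)
    (hSupp : ∀ p ∈ G.Supp, p.1 ∈ G.Args ∧ p.2 ∈ G.Args)
    (hdisj : ∀ p ∈ G.Att, p ∉ G.Supp)
    (hacyc : G.Acyclic)
    (α : Multiset ℝ → Multiset ℝ → ℝ) (ι : ℝ → ℝ → ℝ)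
    (σG σG' : U → ℝ)
    (hmod : IsModular G α ι σG)
    (A' : Finset U)
    (hmod' : IsModular (G.restrict (G.Args \ A')) α ι σG')
    (x : U) (hx : x ∈ G.Args)
    (hreach : ∀ a ∈ A', ¬ G.reaches a x) :
    σG' x = σG x := by
  classical
  suffices H : ∀ n, ∀ x ∈ G.Args, (∀ a ∈ A', ¬ G.reaches a x) →
      (G.Args.filter (fun y => G.reaches y x)).card = n → σG' x = σG x by
    exact H _ x hx hreach rfl
  intro n
  induction n using Nat.strong_induction_on with
  | _ n IH =>
    intro x hx hreach hn
    have hxA' : x ∉ A' := fun h => hreach x h Relation.ReflTransGen.refl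
    have hxS : x ∈ G.Args \ A' := Finset.mem_sdiff.mpr ⟨hx, hxA'⟩
    -- attackers and supporters coincide in the restricted graph
    have hedgeA' : ∀ y, G.edge y x → y ∉ A' := by
      intro y he hyA'
      exact hreach y hyA' (Relation.ReflTransGen.single he)
    have hatt : (G.restrict (G.Args \ A')).attackers x = G.attackers x := by
      ext a
      simp only [QBAG.restrict, QBAG.attackers, Finset.mem_filter, Finset.mem_sdiff]
      constructor
      · rintro ⟨⟨ha, _⟩, haAtt, _⟩
        exact ⟨ha, haAtt⟩
      · rintro ⟨ha, haAtt⟩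
        have haA' : a ∉ A' := hedgeA' a (Or.inl haAtt)
        exact ⟨⟨ha, haA'⟩, haAtt, ⟨ha, haA'⟩, hx, hxA'⟩
    have hsupp : (G.restrict (G.Args \ A')).supporters x = G.supporters x := by
      ext a
      simp only [QBAG.restrict, QBAG.supporters, Finset.mem_filter, Finset.mem_sdiff]
      constructor
      · rintro ⟨⟨ha, _⟩, haSupp, _⟩
        exact ⟨ha, haSupp⟩
      · rintro ⟨ha, haSupp⟩
        have haA' : a ∉ A' := hedgeA' a (Or.inr haSupp)
        exact ⟨⟨ha, haA'⟩, haSupp, ⟨ha, haA'⟩, hx, hxA'⟩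
    -- induction step for predecessors
    have key : ∀ y ∈ G.Args, G.edge y x → σG' y = σG y := by
      intro y hy he
      have hlt : (G.Args.filter (fun z => G.reaches z y)).card < n := by
        rw [← hn]
        apply Finset.card_lt_card
        constructor
        · intro z hz
          rw [Finset.mem_filter] at hz ⊢
          exact ⟨hz.1, hz.2.trans (Relation.ReflTransGen.single he)⟩
        · intro hsub
          have : x ∈ G.Args.filter (fun z => G.reaches z y) :=
            hsub (Finset.mem_filter.mpr ⟨hx, Relation.ReflTransGen.refl⟩)
          rw [Finset.mem_filter] at this
          exact hacyc x (Relation.TransGen.tail' this.2 he)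
      refine IH _ hlt y hy ?_ rfl
      intro a ha hr
      exact hreach a ha (hr.trans (Relation.ReflTransGen.single he))
    have h1 := hmod x hx
    have h2 := hmod' x hxS
    rw [h2, h1, hatt, hsupp]
    have hτ : (G.restrict (G.Args \ A')).τ x = G.τ x := rfl
    rw [hτ]
    congr 1
    congr 1
    · apply Multiset.map_congr rfl
      intro y hy
      rw [QBAG.attackers, Finset.mem_val, Finset.mem_filter] at hy
      exact key y hy.1 (Or.inl hy.2)
    · apply Multiset.map_congr rfl
      intro y hy
      rw [QBAG.supporters, Finset.mem_val, Finset.mem_filter] at hy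
      exact key y hy.1 (Or.inr hy.2)
end

section
/- Let G = (Args, τ, Att, Supp) be a finite acyclic QBAG and let G' = (Args, τ, Att', Supp') be obtained from G by deleting a single edge (y, z) from Att ∪ Supp (i.e., Att' ∪ Supp' = (Att ∪ Supp) ∖ {(y,z)}, with Att' ⊆ Att and Supp' ⊆ Supp). Then for every x ∈ Args with x ≠ z such that there is no directed path from z to x in G, and for any aggregation function α and influence function ι, the modular final strengths agree: σ_G(x) = σ_{G'}(x). (Directionality of modular semantics, acyclic case.) -/
/-- Directionality of modular semantics on finite acyclic QBAGs: deleting a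
single edge `(y, z)` does not change the modular final strength of any argument
`x ≠ z` to which there is no directed path from `z`. -/
theorem modular_directionality {U : Type*} [DecidableEq U]
    (G G' : QBAG U)
    (hAtt : ∀ p ∈ G.Att, p.1 ∈ G.Args ∧ p.2 ∈ G.Args)
    (hSupp : ∀ p ∈ G.Supp, p.1 ∈ G.Args ∧ p.2 ∈ G.Args)
    (hdisj : ∀ p ∈ G.Att, p ∉ G.Supp)
    (hacyc : G.Acyclic)
    (y z : U) (hyz : (y, z) ∈ G.Att ∪ G.Supp)
    (hArgs : G'.Args = G.Args) (hτ : G'.τ = G.τ)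
    (hA : G'.Att ⊆ G.Att) (hS : G'.Supp ⊆ G.Supp)
    (hdel : G'.Att ∪ G'.Supp = (G.Att ∪ G.Supp) \ {(y, z)})
    (α : Multiset ℝ → Multiset ℝ → ℝ) (ι : ℝ → ℝ → ℝ)
    (σG σG' : U → ℝ)
    (hmod : IsModular G α ι σG) (hmod' : IsModular G' α ι σG')
    (x : U) (hx : x ∈ G.Args) (hxz : x ≠ z)
    (hpath : ¬ G.reaches z x) :
    σG x = σG' x := by
  classical
  clear hxz
  suffices key : ∀ n, ∀ x : U,
      (G.Args.filter (fun a => Relation.TransGen G.edge a x)).card = n →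
      x ∈ G.Args → ¬ G.reaches z x → σG x = σG' x by
    exact key _ x rfl hx hpath
  intro n
  induction n using Nat.strong_induction_on with
  | _ n ih =>
  intro x hn hx hpath
  have hxz : x ≠ z := fun h => hpath (h ▸ Relation.ReflTransGen.refl)
  have hend : ∀ a b : U, G.edge a b → a ∈ G.Args := fun a b h =>
    h.elim (fun h => (hAtt _ h).1) (fun h => (hSupp _ h).1)
  have hmemdel : ∀ a : U, (a, x) ∈ G.Att ∪ G.Supp → (a, x) ∈ G'.Att ∪ G'.Supp := by
    intro a h
    rw [hdel, Finset.mem_sdiff]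
    refine ⟨h, ?_⟩
    simp only [Finset.mem_singleton, Prod.mk.injEq, not_and]
    exact fun _ => hxz
  have hAeq : ∀ a : U, ((a, x) ∈ G'.Att ↔ (a, x) ∈ G.Att) := by
    intro a
    constructor
    · exact fun h => hA h
    · intro h
      rcases Finset.mem_union.1 (hmemdel a (Finset.mem_union_left _ h)) with h' | h'
      · exact h'
      · exact absurd (hS h') (hdisj _ h)
  have hSeq : ∀ a : U, ((a, x) ∈ G'.Supp ↔ (a, x) ∈ G.Supp) := by
    intro a
    constructor
    · exact fun h => hS h
    · intro h
      rcases Finset.mem_union.1 (hmemdel a (Finset.mem_union_right _ h)) with h' | h'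
      · exact absurd h (hdisj _ (hA h'))
      · exact h'
  have hatt : G'.attackers x = G.attackers x := by
    unfold QBAG.attackers
    rw [hArgs]
    exact Finset.filter_congr (fun a _ => hAeq a)
  have hsupp : G'.supporters x = G.supporters x := by
    unfold QBAG.supporters
    rw [hArgs]
    exact Finset.filter_congr (fun a _ => hSeq a)
  have hrec : ∀ a : U, G.edge a x → σG a = σG' a := by
    intro a ha
    have haArgs : a ∈ G.Args := hend a x ha
    have hlt : (G.Args.filter (fun b => Relation.TransGen G.edge b a)).card <
        (G.Args.filter (fun b => Relation.TransGen G.edge b x)).card := by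
      apply Finset.card_lt_card
      constructor
      · intro b hb
        simp only [Finset.mem_filter] at hb ⊢
        exact ⟨hb.1, hb.2.tail ha⟩
      · intro hsub
        have : a ∈ G.Args.filter (fun b => Relation.TransGen G.edge b x) := by
          simp only [Finset.mem_filter]
          exact ⟨haArgs, Relation.TransGen.single ha⟩
        have := hsub this
        simp only [Finset.mem_filter] at this
        exact hacyc a this.2
    have hnr : ¬ G.reaches z a := fun h => hpath (h.tail ha)
    exact ih _ (hn ▸ hlt) a rfl haArgs hnr
  have hmapA : (G.attackers x).val.map σG = (G.attackers x).val.map σG' := by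
    apply Multiset.map_congr rfl
    intro a ha
    exact hrec a (Or.inl (Finset.mem_filter.1 ha).2)
  have hmapS : (G.supporters x).val.map σG = (G.supporters x).val.map σG' := by
    apply Multiset.map_congr rfl
    intro a ha
    exact hrec a (Or.inr (Finset.mem_filter.1 ha).2)
  rw [hmod x hx, hmod' x (hArgs ▸ hx), hτ, hatt, hsupp, hmapA, hmapS]
end

section
/- Let G = (Args, τ, Att, Supp) be a finite acyclic QBAG with τ : Args → [0,1], α an aggregation function and ι an influence function, and σ the resulting modular final strength. Assume: (a) ι maps [0,1] × ℝ into [0,1] (so that all final strengths lie in [0,1]); (b) α is antitone in the attacker multiset and monotone in the supporter multiset: for multisets A', A, S, S' of reals in [0,1] with A' a submultiset of A and S a submultiset of S', α(A, S) ≤ α(A', S'); (c) ι is monotone nondecreasing in each of its two arguments. Then for all x, y ∈ Args with R⁻(x) ⊇ R⁻(y), R⁺(x) ⊆ R⁺(y), and τ(x) ≤ τ(y), it holds that σ_G(x) ≤ σ_G(y). -/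
/-- Weak monotonicity (condition 1) of modular semantics on finite acyclic QBAGs
with initial strengths in `[0,1]`: if the influence function maps `[0,1] × ℝ`
into `[0,1]`, the aggregation function is antitone in the attacker multiset and
monotone in the supporter multiset (on values in `[0,1]`), and the influence
function is monotone nondecreasing in each argument, then an argument with more
attackers, fewer supporters and smaller initial strength has smaller final
strength. -/
theorem modular_weak_monotonicity {U : Type*} [DecidableEq U]
    (G : QBAG U)
    (hAtt : ∀ p ∈ G.Att, p.1 ∈ G.Args ∧ p.2 ∈ G.Args)
    (hSupp : ∀ p ∈ G.Supp, p.1 ∈ G.Args ∧ p.2 ∈ G.Args)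
    (hdisj : ∀ p ∈ G.Att, p ∉ G.Supp)
    (hacyc : G.Acyclic)
    (hτ : ∀ a ∈ G.Args, 0 ≤ G.τ a ∧ G.τ a ≤ 1)
    (α : Multiset ℝ → Multiset ℝ → ℝ) (ι : ℝ → ℝ → ℝ)
    (hι01 : ∀ w s : ℝ, 0 ≤ w → w ≤ 1 → 0 ≤ ι w s ∧ ι w s ≤ 1)
    (hα : ∀ A A' S S' : Multiset ℝ, A' ≤ A → S ≤ S' →
      (∀ r ∈ A, 0 ≤ r ∧ r ≤ 1) → (∀ r ∈ S', 0 ≤ r ∧ r ≤ 1) → α A S ≤ α A' S')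
    (hιw : ∀ w w' s : ℝ, w ≤ w' → ι w s ≤ ι w' s)
    (hιs : ∀ w s s' : ℝ, s ≤ s' → ι w s ≤ ι w s')
    (σG : U → ℝ) (hmod : IsModular G α ι σG)
    (x y : U) (hx : x ∈ G.Args) (hy : y ∈ G.Args)
    (hRn : G.attackers y ⊆ G.attackers x)
    (hRp : G.supporters x ⊆ G.supporters y)
    (hτxy : G.τ x ≤ G.τ y) :
    σG x ≤ σG y := by
  have hbound : ∀ a ∈ G.Args, 0 ≤ σG a ∧ σG a ≤ 1 := by
    intro a ha
    rw [hmod a ha]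
    exact hι01 _ _ (hτ a ha).1 (hτ a ha).2
  have hmemA : ∀ r ∈ (G.attackers x).val.map σG, 0 ≤ r ∧ r ≤ 1 := by
    intro r hr
    obtain ⟨a, ha, rfl⟩ := Multiset.mem_map.1 hr
    exact hbound a (Finset.mem_filter.1 ha).1
  have hmemS : ∀ r ∈ (G.supporters y).val.map σG, 0 ≤ r ∧ r ≤ 1 := by
    intro r hr
    obtain ⟨a, ha, rfl⟩ := Multiset.mem_map.1 hr
    exact hbound a (Finset.mem_filter.1 ha).1
  have hαle : α ((G.attackers x).val.map σG) ((G.supporters x).val.map σG) ≤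
      α ((G.attackers y).val.map σG) ((G.supporters y).val.map σG) :=
    hα _ _ _ _ (Multiset.map_le_map (Finset.val_le_iff.2 hRn))
      (Multiset.map_le_map (Finset.val_le_iff.2 hRp)) hmemA hmemS
  rw [hmod x hx, hmod y hy]
  calc ι (G.τ x) (α ((G.attackers x).val.map σG) ((G.supporters x).val.map σG))
      ≤ ι (G.τ y) (α ((G.attackers x).val.map σG) ((G.supporters x).val.map σG)) :=
        hιw _ _ _ hτxy
    _ ≤ _ := hιs _ _ _ hαle
end

section
/- Define the Euler-based influence function ι^e : ℝ → ℝ → ℝ by ι^e_w(s) = 1 − (1 − w²) / (1 + w · e^s). Then for all w, w' ∈ [0,1] and all s, s' ∈ ℝ with w ≤ w' and s ≤ s', it holds that ι^e_w(s) ≤ ι^e_{w'}(s'). (Joint monotonicity of the Euler-based influence function in the initial strength and the aggregate.) -/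
/-- The Euler-based influence function:
`ι^e_w(s) = 1 − (1 − w²) / (1 + w · eˢ)`. -/
noncomputable def eulerInfluence (w s : ℝ) : ℝ :=
  1 - (1 - w ^ 2) / (1 + w * Real.exp s)

/-- Joint monotonicity of the Euler-based influence function in the initial
strength `w ∈ [0,1]` and the aggregate `s ∈ ℝ`. -/
theorem eulerInfluence_monotone (w w' s s' : ℝ)
    (hw0 : 0 ≤ w) (hw1 : w ≤ 1) (hw'0 : 0 ≤ w') (hw'1 : w' ≤ 1)
    (hww : w ≤ w') (hss : s ≤ s') :
    eulerInfluence w s ≤ eulerInfluence w' s' := by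
  unfold eulerInfluence
  have ht : (0:ℝ) < Real.exp s := Real.exp_pos s
  have ht' : (0:ℝ) < Real.exp s' := Real.exp_pos s'
  have htt : Real.exp s ≤ Real.exp s' := Real.exp_le_exp.mpr hss
  have hd : (0:ℝ) < 1 + w * Real.exp s := by positivity
  have hd' : (0:ℝ) < 1 + w' * Real.exp s' := by positivity
  have key : (1 - w' ^ 2) / (1 + w' * Real.exp s') ≤
      (1 - w ^ 2) / (1 + w * Real.exp s) := by
    rw [div_le_div_iff₀ hd' hd]
    nlinarith [mul_nonneg (sub_nonneg.mpr hww) (by linarith : (0:ℝ) ≤ w + w'),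
      mul_nonneg (mul_nonneg (by nlinarith : (0:ℝ) ≤ 1 - w^2) hw'0) (sub_nonneg.mpr htt),
      mul_nonneg (mul_nonneg ht.le (sub_nonneg.mpr hww)) (by nlinarith : (0:ℝ) ≤ 1 + w*w')]
  linarith
end

section
/- Let p ≥ 1 be a natural number, let h : ℝ → ℝ be given by h(x) = max(0, x)^p / (1 + max(0, x)^p), and define the p-Max(1) influence function ι^p : ℝ → ℝ → ℝ by ι^p_w(s) = w − w · h(−s) + (1 − w) · h(s). Then for all w, w' ∈ [0,1] and all s, s' ∈ ℝ with w ≤ w' and s ≤ s', it holds that ι^p_w(s) ≤ ι^p_{w'}(s'). (Joint monotonicity of the p-Max(1) influence function, which for p = 2 is the influence function of the Quadratic Energy semantics, in the initial strength and the aggregate.) -/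
/-- The auxiliary function `h(x) = max(0, x)^p / (1 + max(0, x)^p)` of the
p-Max(k) influence functions. -/
noncomputable def pMaxAux (p : ℕ) (x : ℝ) : ℝ :=
  max 0 x ^ p / (1 + max 0 x ^ p)

/-- The p-Max(1) influence function:
`ι^p_w(s) = w − w · h(−s) + (1 − w) · h(s)` (for `p = 2` this is the influence
function of the Quadratic Energy semantics). -/
noncomputable def pMaxInfluence (p : ℕ) (w s : ℝ) : ℝ :=
  w - w * pMaxAux p (-s) + (1 - w) * pMaxAux p s

lemma pMaxAux_nonneg' (p : ℕ) (x : ℝ) :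
    0 ≤ (max 0 x) ^ p / (1 + (max 0 x) ^ p) := by
  have h0 : (0:ℝ) ≤ max 0 x ^ p := pow_nonneg (le_max_left 0 x) p
  positivity

lemma pMaxAux_le_one (p : ℕ) (x : ℝ) : pMaxAux p x ≤ 1 := by
  unfold pMaxAux
  have h0 : (0:ℝ) ≤ max 0 x ^ p := pow_nonneg (le_max_left 0 x) p
  rw [div_le_one (by linarith)]
  linarith

lemma pMaxAux_nonneg (p : ℕ) (x : ℝ) : 0 ≤ pMaxAux p x :=
  pMaxAux_nonneg' p x

lemma pMaxAux_mono (p : ℕ) {x y : ℝ} (h : x ≤ y) : pMaxAux p x ≤ pMaxAux p y := by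
  unfold pMaxAux
  have hx : (0:ℝ) ≤ max 0 x := le_max_left 0 x
  have hxy : max 0 x ≤ max 0 y := max_le_max le_rfl h
  have hpow : max 0 x ^ p ≤ max 0 y ^ p := pow_le_pow_left₀ hx hxy p
  have h0 : (0:ℝ) ≤ max 0 x ^ p := pow_nonneg hx p
  have h1 : (0:ℝ) ≤ max 0 y ^ p := pow_nonneg (le_max_left 0 y) p
  rw [div_le_div_iff₀ (by linarith) (by linarith)]
  ring_nf
  nlinarith

lemma pMaxAux_zero_of_nonpos (p : ℕ) (hp : 1 ≤ p) {x : ℝ} (h : x ≤ 0) :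
    pMaxAux p x = 0 := by
  unfold pMaxAux
  rw [max_eq_left h, zero_pow (by omega), zero_div]


/-- Joint monotonicity of the p-Max(1) influence function (`p ≥ 1`) in the
initial strength `w ∈ [0,1]` and the aggregate `s ∈ ℝ`. -/
theorem pMaxInfluence_monotone (p : ℕ) (hp : 1 ≤ p) (w w' s s' : ℝ)
    (hw0 : 0 ≤ w) (hw1 : w ≤ 1) (hw'0 : 0 ≤ w') (hw'1 : w' ≤ 1)
    (hww : w ≤ w') (hss : s ≤ s') :
    pMaxInfluence p w s ≤ pMaxInfluence p w' s' := by
  have key : pMaxAux p (-s) + pMaxAux p s ≤ 1 := by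
    rcases le_total s 0 with h | h
    · rw [pMaxAux_zero_of_nonpos p hp h]
      simpa using pMaxAux_le_one p (-s)
    · rw [pMaxAux_zero_of_nonpos p hp (neg_nonpos.mpr h)]
      simpa using pMaxAux_le_one p s
  have step1 : pMaxInfluence p w s ≤ pMaxInfluence p w' s := by
    unfold pMaxInfluence
    nlinarith [pMaxAux_nonneg p s, pMaxAux_nonneg p (-s)]
  have step2 : pMaxInfluence p w' s ≤ pMaxInfluence p w' s' := by
    unfold pMaxInfluence
    have h1 : pMaxAux p s ≤ pMaxAux p s' := pMaxAux_mono p hss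
    have h2 : pMaxAux p (-s') ≤ pMaxAux p (-s) := pMaxAux_mono p (by linarith)
    nlinarith
  linarith
end
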